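/- arXiv:1808.07907 — 2 statements merged into one kernel-verified Lean document; each statement's English description precedes it below -/
import Mathlib

section
/- For every ρ₊ > 0 there exists a constant c > 0 (depending only on ρ₊, Γ₋, Γ₊ and g) such that the following holds: for every ρ ∈ [0, ρ₊] and φ ≥ 0 with R(φ) = ρ, every ε ∈ (0,1], every n ∈ ℕ, and every family X₁, …, Xₙ of independent random variables each with distribution ν_φ, one has P[Σ_{k=1}^n X_k ≥ (ρ + ε)n] ≤ e^{−c ε² n}. -/
/-!
Chernoff bound. Since `g k ≥ Γ₋ k`, we have `g(k)! ≥ Γ₋ᵏ k!`, so every series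
`∑ φᵏ / g(k)! · u k` with `0 ≤ u k ≤ aᵏ` is dominated by `exp (a φ / Γ₋)`. The identity
`∑ g k φᵏ / g(k)! = φ Z(φ)` and `g k ≤ Γ₊ k` give `φ ≤ Γ₊ R(φ) ≤ Γ₊ ρ₊`; hence for `0 ≤ t ≤ 1`,
`E[X² e^{tX}] ≤ B := exp (4 e Γ₊ ρ₊ / Γ₋)` uniformly in `φ`. Integrating
`e^y ≤ 1 + y + y² e^y` (`y ≥ 0`) gives `E[e^{tX}] ≤ exp (t ρ + t² B)`, and the Chernoff bound
at `t = ε / (2B)` produces the exponent `-ε² n / (4B)`.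
-/

open MeasureTheory ProbabilityTheory

/-- The "generalized factorial" `g(k)! = g(k) ⋯ g(1)`, with `g(0)! = 1`. -/
noncomputable def gFact (g : ℕ → ℝ) : ℕ → ℝ
  | 0 => 1
  | n + 1 => g (n + 1) * gFact g n

/-- The partition function `Z(φ) = Σ_{k=0}^∞ φ^k / g(k)!`. -/
noncomputable def Zfun (g : ℕ → ℝ) (φ : ℝ) : ℝ := ∑' k : ℕ, φ ^ k / gFact g k

/-- The measure `ν_φ` on `ℕ`, given by `ν_φ(k) = φ^k / (g(k)!·Z(φ))`.
For `φ = 0` this is the Dirac mass at `0`. -/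
noncomputable def nuMeasure (g : ℕ → ℝ) (φ : ℝ) : Measure ℕ :=
  Measure.sum fun k =>
    (ENNReal.ofReal (φ ^ k / (gFact g k * Zfun g φ))) • Measure.dirac k

/-- The mean `R(φ) = (1/Z(φ)) Σ_{k=0}^∞ k φ^k / g(k)!` of `ν_φ`. -/
noncomputable def Rfun (g : ℕ → ℝ) (φ : ℝ) : ℝ :=
  (∑' k : ℕ, (k : ℝ) * φ ^ k / gFact g k) / Zfun g φ

open Real

lemma Real.hasSum_pow_div_factorial (x : ℝ) :
    HasSum (fun n : ℕ => x ^ n / n.factorial) (exp x) := by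
  rw [exp_eq_exp_ℝ]
  exact NormedSpace.expSeries_div_hasSum_exp x

lemma Real.exp_le_one_add_add_sq_mul_exp {y : ℝ} (hy : 0 ≤ y) :
    exp y ≤ 1 + y + y ^ 2 * exp y := by
  -- `(1 - y) eʸ ≤ 1` gives `eʸ ≤ 1 + y eʸ`; substituting this bound into `y eʸ` once more.
  have h1 : exp y ≤ 1 + y * exp y := by
    have hinv : exp (-y) * exp y = 1 := by rw [← exp_add, neg_add_cancel, exp_zero]
    nlinarith [mul_le_mul_of_nonneg_right (add_one_le_exp (-y)) (exp_pos y).le]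
  nlinarith [mul_le_mul_of_nonneg_left h1 hy]

lemma Real.exp_mul_natCast_le_pow {t : ℝ} (ht : t ≤ 1) (k : ℕ) : exp (t * k) ≤ exp 1 ^ k := by
  rw [← exp_nat_mul, mul_one, exp_le_exp]
  nlinarith [(Nat.cast_nonneg k : (0 : ℝ) ≤ k)]

lemma Nat.cast_sq_le_four_pow (k : ℕ) : (k : ℝ) ^ 2 ≤ 4 ^ k := by
  rw [show (4 : ℝ) ^ k = ((2 : ℝ) ^ k) ^ 2 by rw [← pow_mul, mul_comm, pow_mul]; norm_num]
  gcongr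
  exact_mod_cast Nat.lt_two_pow_self.le

section Increments

variable {g : ℕ → ℝ} {Γ : ℝ}

lemma mul_le_of_le_increments (hg0 : g 0 = 0) (h : ∀ k, 1 ≤ k → Γ ≤ g k - g (k - 1)) (k : ℕ) :
    Γ * k ≤ g k := by
  induction k with
  | zero => simp [hg0]
  | succ n ih =>
    have := h (n + 1) (by omega)
    rw [Nat.add_sub_cancel] at this
    push_cast
    linarith

lemma le_mul_of_increments_le (hg0 : g 0 = 0) (h : ∀ k, 1 ≤ k → g k - g (k - 1) ≤ Γ) (k : ℕ) :
    g k ≤ Γ * k := by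
  induction k with
  | zero => simp [hg0]
  | succ n ih =>
    have := h (n + 1) (by omega)
    rw [Nat.add_sub_cancel] at this
    push_cast
    linarith

end Increments

section GFact

variable {g : ℕ → ℝ} {Γ : ℝ}

lemma pow_mul_factorial_le_gFact (hΓ : 0 ≤ Γ) (hlow : ∀ k : ℕ, Γ * k ≤ g k) (k : ℕ) :
    Γ ^ k * k.factorial ≤ gFact g k := by
  induction k with
  | zero => simp [gFact]
  | succ n ih =>
    calc Γ ^ (n + 1) * (n + 1).factorial = (Γ * (n + 1 : ℕ)) * (Γ ^ n * n.factorial) := by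
          push_cast [Nat.factorial_succ]; ring
      _ ≤ g (n + 1) * gFact g n := by
          gcongr
          exacts [(mul_nonneg hΓ (Nat.cast_nonneg _)).trans (hlow _), hlow _]
      _ = gFact g (n + 1) := rfl

lemma gFact_pos (hΓ : 0 < Γ) (hlow : ∀ k : ℕ, Γ * k ≤ g k) (k : ℕ) : 0 < gFact g k :=
  lt_of_lt_of_le (by positivity) (pow_mul_factorial_le_gFact hΓ.le hlow k)

end GFact

lemma Rfun_eq_tsum_div (g : ℕ → ℝ) (φ : ℝ) :
    Rfun g φ = (∑' k : ℕ, φ ^ k / gFact g k * k) / Zfun g φ := by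
  rw [Rfun]
  congr 1
  exact tsum_congr fun k => by ring

section Measure

variable {g : ℕ → ℝ} {φ : ℝ} {f : ℕ → ℝ}

lemma lintegral_nuMeasure (hφ : 0 ≤ φ) (hfact : ∀ k, 0 ≤ gFact g k) (hf0 : ∀ k, 0 ≤ f k)
    (hf : Summable fun k => φ ^ k / gFact g k * f k) :
    ∫⁻ k, ENNReal.ofReal (f k) ∂nuMeasure g φ =
      ENNReal.ofReal ((∑' k, φ ^ k / gFact g k * f k) / Zfun g φ) := by
  have hZ : 0 ≤ Zfun g φ := tsum_nonneg fun k => div_nonneg (pow_nonneg hφ k) (hfact k)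
  have hw : ∀ k, φ ^ k / (gFact g k * Zfun g φ) * f k = φ ^ k / gFact g k * f k / Zfun g φ :=
    fun k => by rw [← div_div, div_mul_eq_mul_div]
  have hw0 : ∀ k, 0 ≤ φ ^ k / gFact g k * f k / Zfun g φ :=
    fun k => by have := hfact k; have := hf0 k; positivity
  simp_rw [nuMeasure, lintegral_sum_measure, lintegral_smul_measure, lintegral_dirac, smul_eq_mul,
    ← ENNReal.ofReal_mul (div_nonneg (pow_nonneg hφ _) (mul_nonneg (hfact _) hZ)), hw,
    ← tsum_div_const]
  exact (ENNReal.ofReal_tsum_of_nonneg hw0 (hf.div_const _)).symm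

lemma integrable_nuMeasure (hφ : 0 ≤ φ) (hfact : ∀ k, 0 ≤ gFact g k) (hf0 : ∀ k, 0 ≤ f k)
    (hf : Summable fun k => φ ^ k / gFact g k * f k) : Integrable f (nuMeasure g φ) := by
  refine ⟨.of_discrete, ?_⟩
  rw [hasFiniteIntegral_iff_ofReal (.of_forall hf0), lintegral_nuMeasure hφ hfact hf0 hf]
  exact ENNReal.ofReal_lt_top

lemma integral_nuMeasure (hφ : 0 ≤ φ) (hfact : ∀ k, 0 ≤ gFact g k) (hf0 : ∀ k, 0 ≤ f k)
    (hf : Summable fun k => φ ^ k / gFact g k * f k) :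
    ∫ k, f k ∂nuMeasure g φ = (∑' k, φ ^ k / gFact g k * f k) / Zfun g φ := by
  have hZ : 0 ≤ Zfun g φ := tsum_nonneg fun k => div_nonneg (pow_nonneg hφ k) (hfact k)
  rw [integral_eq_lintegral_of_nonneg_ae (.of_forall hf0) .of_discrete,
    lintegral_nuMeasure hφ hfact hf0 hf, ENNReal.toReal_ofReal]
  exact div_nonneg (tsum_nonneg fun k => mul_nonneg (div_nonneg (pow_nonneg hφ k) (hfact k))
    (hf0 k)) hZ

end Measure

lemma ProbabilityTheory.mgf_le_exp_mul_add_sq_mul {Ω : Type*} {m : MeasurableSpace Ω}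
    {μ : Measure Ω} [IsProbabilityMeasure μ] {Y : Ω → ℝ} {t : ℝ} (hY : ∀ ω, 0 ≤ Y ω) (ht : 0 ≤ t)
    (h1 : Integrable Y μ) (h2 : Integrable (fun ω => Y ω ^ 2 * exp (t * Y ω)) μ) :
    mgf Y μ t ≤ exp (t * μ[Y] + t ^ 2 * μ[fun ω => Y ω ^ 2 * exp (t * Y ω)]) := by
  have hlin : Integrable (fun ω => 1 + t * Y ω) μ := (integrable_const 1).add (h1.const_mul t)
  calc mgf Y μ t ≤ ∫ ω, (1 + t * Y ω + t ^ 2 * (Y ω ^ 2 * exp (t * Y ω))) ∂μ := by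
        refine integral_mono_of_nonneg (.of_forall fun ω => (exp_pos _).le)
          (hlin.add (h2.const_mul _)) (.of_forall fun ω => ?_)
        have := exp_le_one_add_add_sq_mul_exp (mul_nonneg ht (hY ω))
        simp only
        linarith
    _ = 1 + (t * μ[Y] + t ^ 2 * μ[fun ω => Y ω ^ 2 * exp (t * Y ω)]) := by
        rw [integral_add hlin (h2.const_mul _),
          integral_add (integrable_const 1) (h1.const_mul t), integral_const_mul,
          integral_const_mul]
        simp [add_assoc]
    _ ≤ _ := by linarith [add_one_le_exp (t * μ[Y] + t ^ 2 * μ[fun ω => Y ω ^ 2 * exp (t * Y ω)])]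

lemma ProbabilityTheory.measureReal_sum_ge_le_of_mgf_le {Ω ι : Type*} {m : MeasurableSpace Ω}
    [Fintype ι] {P : Measure Ω} {Y : ι → Ω → ℝ} (hY : ∀ i, Measurable (Y i)) (hind : iIndepFun Y P)
    {t ρ ε B : ℝ} (ht : 0 ≤ t) (hint : ∀ i, Integrable (fun ω => exp (t * Y i ω)) P)
    (hmgf : ∀ i, mgf (Y i) P t ≤ exp (t * ρ + t ^ 2 * B)) :
    P.real {ω | (ρ + ε) * Fintype.card ι ≤ ∑ i, Y i ω} ≤
      exp (-(t * ε - t ^ 2 * B) * Fintype.card ι) := by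
  have := hind.isProbabilityMeasure
  have hchernoff := measure_ge_le_exp_mul_mgf ((ρ + ε) * Fintype.card ι) ht
    (hind.integrable_exp_mul_sum hY (s := Finset.univ) fun i _ => hint i)
  simp only [Finset.sum_apply] at hchernoff
  refine hchernoff.trans ?_
  calc exp (-t * ((ρ + ε) * Fintype.card ι)) * mgf (∑ i, Y i) P t
      ≤ exp (-t * ((ρ + ε) * Fintype.card ι)) * exp (t * ρ + t ^ 2 * B) ^ Fintype.card ι := by
        rw [hind.mgf_sum hY]
        gcongr
        calc ∏ i, mgf (Y i) P t ≤ ∏ _i : ι, exp (t * ρ + t ^ 2 * B) :=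
              Finset.prod_le_prod (fun i _ => mgf_nonneg) fun i _ => hmgf i
          _ = _ := by rw [Finset.prod_const, Finset.card_univ]
    _ = exp (-(t * ε - t ^ 2 * B) * Fintype.card ι) := by
        rw [← exp_nat_mul, ← exp_add]
        ring_nf

section Weights

variable {g : ℕ → ℝ} {Γ Γ' φ : ℝ} (hΓ : 0 < Γ) (hlow : ∀ k : ℕ, Γ * k ≤ g k) (hφ : 0 ≤ φ)
include hΓ hlow hφ

lemma pow_div_gFact_nonneg (k : ℕ) : 0 ≤ φ ^ k / gFact g k :=
  div_nonneg (pow_nonneg hφ k) (gFact_pos hΓ hlow k).le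

lemma pow_div_gFact_mul_le {u : ℕ → ℝ} {a : ℝ} (hu0 : ∀ k, 0 ≤ u k) (hua : ∀ k, u k ≤ a ^ k)
    (k : ℕ) :
    φ ^ k / gFact g k * u k ≤ (a * φ / Γ) ^ k / k.factorial := by
  calc φ ^ k / gFact g k * u k ≤ φ ^ k / (Γ ^ k * k.factorial) * a ^ k := by
        gcongr
        exacts [hu0 k, pow_mul_factorial_le_gFact hΓ.le hlow k, hua k]
    _ = (a * φ / Γ) ^ k / k.factorial := by rw [div_pow, mul_pow]; ring

lemma summable_pow_div_gFact_mul {u : ℕ → ℝ} {a : ℝ} (hu0 : ∀ k, 0 ≤ u k)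
    (hua : ∀ k, u k ≤ a ^ k) :
    Summable (fun k => φ ^ k / gFact g k * u k) :=
  .of_nonneg_of_le (fun k => mul_nonneg (pow_div_gFact_nonneg hΓ hlow hφ k) (hu0 k))
    (pow_div_gFact_mul_le hΓ hlow hφ hu0 hua) (hasSum_pow_div_factorial _).summable

lemma tsum_pow_div_gFact_mul_le {u : ℕ → ℝ} {a : ℝ} (hu0 : ∀ k, 0 ≤ u k)
    (hua : ∀ k, u k ≤ a ^ k) :
    ∑' k, φ ^ k / gFact g k * u k ≤ exp (a * φ / Γ) :=
  hasSum_le (pow_div_gFact_mul_le hΓ hlow hφ hu0 hua)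
    (summable_pow_div_gFact_mul hΓ hlow hφ hu0 hua).hasSum (hasSum_pow_div_factorial _)

lemma summable_pow_div_gFact : Summable (fun k => φ ^ k / gFact g k) := by
  simpa using summable_pow_div_gFact_mul hΓ hlow hφ (u := 1) (a := 1) (fun _ => zero_le_one)
    (fun k => by simp)

lemma summable_pow_div_gFact_mul_natCast : Summable fun k : ℕ => φ ^ k / gFact g k * k :=
  summable_pow_div_gFact_mul hΓ hlow hφ (a := 2) (fun k => Nat.cast_nonneg k)
    (fun k => by exact_mod_cast Nat.lt_two_pow_self.le)

lemma one_le_Zfun : 1 ≤ Zfun g φ := by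
  simpa [gFact, Zfun] using (summable_pow_div_gFact hΓ hlow hφ).le_tsum 0
    (fun k _ => pow_div_gFact_nonneg hΓ hlow hφ k)

lemma hasSum_pow_div_gFact_mul_g (hg0 : g 0 = 0) :
    HasSum (fun k => φ ^ k / gFact g k * g k) (φ * Zfun g φ) := by
  have hshift : ∀ k, φ ^ (k + 1) / gFact g (k + 1) * g (k + 1) = φ * (φ ^ k / gFact g k) := by
    intro k
    have hg : g (k + 1) ≠ 0 := ((by positivity : (0 : ℝ) < Γ * (k + 1 : ℕ)).trans_le (hlow _)).ne'
    rw [show gFact g (k + 1) = g (k + 1) * gFact g k from rfl, pow_succ]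
    field_simp
  rw [← hasSum_nat_add_iff' 1, Finset.sum_range_one, hg0, mul_zero, sub_zero]
  simp only [hshift]
  exact (summable_pow_div_gFact hΓ hlow hφ).hasSum.mul_left φ

lemma le_mul_Rfun (hg0 : g 0 = 0) (hup : ∀ k : ℕ, g k ≤ Γ' * k) : φ ≤ Γ' * Rfun g φ := by
  have hZ : 0 < Zfun g φ := zero_lt_one.trans_le (one_le_Zfun hΓ hlow hφ)
  have hRZ : Rfun g φ * Zfun g φ = ∑' k : ℕ, φ ^ k / gFact g k * k := by
    rw [Rfun_eq_tsum_div, div_mul_cancel₀ _ hZ.ne']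
  refine le_of_mul_le_mul_right ?_ hZ
  calc φ * Zfun g φ = ∑' k, φ ^ k / gFact g k * g k :=
        (hasSum_pow_div_gFact_mul_g hΓ hlow hφ hg0).tsum_eq.symm
    _ ≤ ∑' k : ℕ, Γ' * (φ ^ k / gFact g k * k) :=
        (hasSum_pow_div_gFact_mul_g hΓ hlow hφ hg0).summable.tsum_le_tsum
          (fun k => by nlinarith [hup k, pow_div_gFact_nonneg hΓ hlow hφ k])
          ((summable_pow_div_gFact_mul_natCast hΓ hlow hφ).mul_left Γ')
    _ = Γ' * Rfun g φ * Zfun g φ := by rw [tsum_mul_left, mul_assoc, hRZ]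

lemma isProbabilityMeasure_nuMeasure : IsProbabilityMeasure (nuMeasure g φ) := by
  have hZ : 0 < Zfun g φ := zero_lt_one.trans_le (one_le_Zfun hΓ hlow hφ)
  have h := lintegral_nuMeasure hφ (fun k => (gFact_pos hΓ hlow k).le) (f := 1)
    (fun _ => zero_le_one) (by simpa using summable_pow_div_gFact hΓ hlow hφ)
  simp only [Pi.one_apply, mul_one] at h
  change _ = ENNReal.ofReal (Zfun g φ / Zfun g φ) at h
  constructor
  simpa [div_self hZ.ne'] using h

lemma integral_natCast_nuMeasure : ∫ k : ℕ, (k : ℝ) ∂nuMeasure g φ = Rfun g φ := by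
  rw [integral_nuMeasure hφ (fun k => (gFact_pos hΓ hlow k).le) (fun k => Nat.cast_nonneg k)
    (summable_pow_div_gFact_mul_natCast hΓ hlow hφ), Rfun_eq_tsum_div]

lemma integrable_exp_mul_natCast_nuMeasure {t : ℝ} (ht1 : t ≤ 1) :
    Integrable (fun k : ℕ => exp (t * k)) (nuMeasure g φ) :=
  integrable_nuMeasure hφ (fun k => (gFact_pos hΓ hlow k).le) (fun _ => (exp_pos _).le)
    (summable_pow_div_gFact_mul hΓ hlow hφ (fun _ => (exp_pos _).le) (exp_mul_natCast_le_pow ht1))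

lemma mgf_natCast_nuMeasure_le {t : ℝ} (ht0 : 0 ≤ t) (ht1 : t ≤ 1) :
    mgf (fun k : ℕ => (k : ℝ)) (nuMeasure g φ) t ≤
      exp (t * Rfun g φ + t ^ 2 * exp (4 * exp 1 * φ / Γ)) := by
  have hfact k := (gFact_pos hΓ hlow k).le
  have := isProbabilityMeasure_nuMeasure hΓ hlow hφ
  have hu0 : ∀ k : ℕ, 0 ≤ (k : ℝ) ^ 2 * exp (t * k) := fun k => by positivity
  have hu : ∀ k : ℕ, (k : ℝ) ^ 2 * exp (t * k) ≤ (4 * exp 1) ^ k := by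
    intro k
    rw [mul_pow]
    exact mul_le_mul (Nat.cast_sq_le_four_pow k) (exp_mul_natCast_le_pow ht1 k) (exp_pos _).le
      (by positivity)
  have hsum := summable_pow_div_gFact_mul hΓ hlow hφ hu0 hu
  refine (mgf_le_exp_mul_add_sq_mul (fun k => Nat.cast_nonneg k) ht0
    (integrable_nuMeasure hφ hfact (fun k => Nat.cast_nonneg k)
      (summable_pow_div_gFact_mul_natCast hΓ hlow hφ))
    (integrable_nuMeasure hφ hfact hu0 hsum)).trans ?_
  rw [integral_natCast_nuMeasure hΓ hlow hφ, integral_nuMeasure hφ hfact hu0 hsum]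
  gcongr
  exact (div_le_self (tsum_nonneg fun k => mul_nonneg (pow_div_gFact_nonneg hΓ hlow hφ k) (hu0 k))
    (one_le_Zfun hΓ hlow hφ)).trans (tsum_pow_div_gFact_mul_le hΓ hlow hφ hu0 hu)

end Weights

theorem zrp_concentration_upper_general
    (g : ℕ → ℝ) (Γm Γp : ℝ)
    (hΓm : 0 < Γm) (hΓp : 1 ≤ Γp)
    (hg0 : g 0 = 0)
    (hg : ∀ k : ℕ, 1 ≤ k → Γm ≤ g k - g (k - 1) ∧ g k - g (k - 1) ≤ Γp)
    (ρp : ℝ) (hρp : 0 < ρp) :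
    ∃ c : ℝ, 0 < c ∧
      ∀ ρ : ℝ, ρ ∈ Set.Icc 0 ρp → ∀ φ : ℝ, 0 ≤ φ → Rfun g φ = ρ →
      ∀ ε : ℝ, ε ∈ Set.Ioc (0 : ℝ) 1 → ∀ n : ℕ,
      ∀ (Ω : Type) (_ : MeasurableSpace Ω) (P : Measure Ω), IsProbabilityMeasure P →
      ∀ X : Fin n → Ω → ℕ, (∀ i, Measurable (X i)) →
        iIndepFun X P →
        (∀ i, Measure.map (X i) P = nuMeasure g φ) →
        P {ω | (ρ + ε) * n ≤ ∑ i, (X i ω : ℝ)} ≤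
          ENNReal.ofReal (Real.exp (-c * ε ^ 2 * n)) := by
  have hlow := mul_le_of_le_increments hg0 fun k hk => (hg k hk).1
  have hup := le_mul_of_increments_le hg0 fun k hk => (hg k hk).2
  set B := exp (4 * exp 1 * (Γp * ρp) / Γm)
  have hB : 1 ≤ B := one_le_exp (by positivity)
  refine ⟨1 / (4 * B), by positivity, ?_⟩
  rintro _ ⟨-, hρ⟩ φ hφ rfl ε ⟨hε0, hε1⟩ n Ω _ P _ X hX hind hmap
  set t := ε / (2 * B)
  have ht0 : 0 ≤ t := by positivity
  have ht1 : t ≤ 1 := by rw [div_le_one (by positivity)]; linarith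
  have hφB : exp (4 * exp 1 * φ / Γm) ≤ B := by
    have hφρ : φ ≤ Γp * ρp := (le_mul_Rfun hΓm hlow hφ hg0 hup).trans (by gcongr)
    exact exp_le_exp.mpr (by gcongr)
  have hint i : Integrable (fun ω => exp (t * (X i ω : ℝ))) P := by
    have h := integrable_exp_mul_natCast_nuMeasure hΓm hlow hφ ht1
    rw [← hmap i] at h
    exact (integrable_map_measure .of_discrete (hX i).aemeasurable).mp h
  have hmgf i : mgf (fun ω => (X i ω : ℝ)) P t ≤ exp (t * Rfun g φ + t ^ 2 * B) := by
    change mgf ((fun k : ℕ => (k : ℝ)) ∘ X i) P t ≤ _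
    rw [← mgf_map (hX i).aemeasurable .of_discrete, hmap i]
    exact (mgf_natCast_nuMeasure_le hΓm hlow hφ ht0 ht1).trans (by gcongr)
  have htail := measureReal_sum_ge_le_of_mgf_le (fun i => measurable_from_top.comp (hX i))
    (hind.comp (fun _ => Nat.cast) fun _ => measurable_from_top) ht0 hint hmgf (ε := ε)
  rw [Fintype.card_fin] at htail
  rw [← ENNReal.ofReal_toReal (measure_ne_top P _)]
  refine ENNReal.ofReal_le_ofReal (htail.trans_eq ?_)
  congr 1
  simp only [t]
  field_simp
  ring

/-- upper concentration of the invariant measure. -/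
theorem zrp_concentration_upper
    (g : ℕ → ℝ) (Γm Γp : ℝ)
    (hΓm : 0 < Γm) (hΓm1 : Γm ≤ 1) (hΓp : 1 ≤ Γp)
    (hg0 : g 0 = 0)
    (hg : ∀ k : ℕ, 1 ≤ k → Γm ≤ g k - g (k - 1) ∧ g k - g (k - 1) ≤ Γp)
    (ρp : ℝ) (hρp : 0 < ρp) :
    ∃ c : ℝ, 0 < c ∧
      ∀ ρ : ℝ, ρ ∈ Set.Icc 0 ρp → ∀ φ : ℝ, 0 ≤ φ → Rfun g φ = ρ →
      ∀ ε : ℝ, ε ∈ Set.Ioc (0 : ℝ) 1 → ∀ n : ℕ,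
      ∀ (Ω : Type) (_ : MeasurableSpace Ω) (P : Measure Ω), IsProbabilityMeasure P →
      ∀ X : Fin n → Ω → ℕ, (∀ i, Measurable (X i)) →
        iIndepFun X P →
        (∀ i, Measure.map (X i) P = nuMeasure g φ) →
        P {ω | (ρ + ε) * n ≤ ∑ i, (X i ω : ℝ)} ≤
          ENNReal.ofReal (Real.exp (-c * ε ^ 2 * n)) :=
  zrp_concentration_upper_general g Γm Γp hΓm hΓp hg0 hg ρp hρp
end

section
/- Let Γ ≥ 1 and t ≥ 0, and let X be a Poisson random variable with mean Γt. Then P[X ≥ (2Γ + 1)t] ≤ e^{−t}. -/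
open MeasureTheory

/-- if `X` is Poisson with mean `Γt`, where `Γ ≥ 1` and `t ≥ 0`,
then `P[X ≥ (2Γ + 1)t] ≤ e^{−t}`. -/
theorem poisson_tail_bound_rate
    {Ω : Type} [MeasurableSpace Ω] (P : Measure Ω) [IsProbabilityMeasure P]
    (Γ t : ℝ) (hΓ : 1 ≤ Γ) (ht : 0 ≤ t)
    (X : Ω → ℕ)
    (hlaw : ∀ k : ℕ, P {ω | X ω = k} =
      ENNReal.ofReal (Real.exp (-(Γ * t)) * (Γ * t) ^ k / (Nat.factorial k))) :
    P {ω | (2 * Γ + 1) * t ≤ (X ω : ℝ)} ≤ ENNReal.ofReal (Real.exp (-t)) := by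
  set μ := Γ * t with hμdef
  set a := (2 * Γ + 1) * t with hadef
  have hμ0 : 0 ≤ μ := mul_nonneg (le_trans zero_le_one hΓ) ht
  have hexp : Real.exp = fun x : ℝ => ∑' n : ℕ, x ^ n / n.factorial := by
    funext x
    rw [Real.exp_eq_exp_ℝ, NormedSpace.exp_eq_tsum_div]
  have hsub : {ω | a ≤ (X ω : ℝ)} ⊆ ⋃ k : ℕ, {ω | X ω = k ∧ a ≤ (k : ℝ)} := by
    intro ω hω
    exact Set.mem_iUnion.2 ⟨X ω, rfl, hω⟩
  have hnn : ∀ k : ℕ,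
      0 ≤ Real.exp (-μ - a) * (μ * Real.exp 1) ^ k / k.factorial := by
    intro k
    positivity
  have hsummable : Summable fun k : ℕ =>
      Real.exp (-μ - a) * (μ * Real.exp 1) ^ k / k.factorial := by
    have := (Real.summable_pow_div_factorial (μ * Real.exp 1)).mul_left
      (Real.exp (-μ - a))
    simpa [mul_div_assoc] using this
  calc P {ω | a ≤ (X ω : ℝ)}
      ≤ ∑' k : ℕ, P {ω | X ω = k ∧ a ≤ (k : ℝ)} :=
        (measure_mono hsub).trans (measure_iUnion_le _)
    _ ≤ ∑' k : ℕ, ENNReal.ofReal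
          (Real.exp (-μ - a) * (μ * Real.exp 1) ^ k / k.factorial) := by
        apply ENNReal.tsum_le_tsum
        intro k
        by_cases hk : a ≤ (k : ℝ)
        · have hset : {ω | X ω = k ∧ a ≤ (k : ℝ)} = {ω | X ω = k} := by
            ext ω; simp [hk]
          rw [hset, hlaw k]
          apply ENNReal.ofReal_le_ofReal
          have h1 : (μ * Real.exp 1) ^ k = μ ^ k * Real.exp k := by
            rw [mul_pow, ← Real.exp_nat_mul]
            ring_nf
          rw [h1]
          have h2 : Real.exp (-μ) ≤ Real.exp (-μ - a) * Real.exp k := by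
            rw [← Real.exp_add]
            apply Real.exp_le_exp.2
            linarith
          have hfac : (0:ℝ) < k.factorial := by positivity
          rw [div_le_div_iff_of_pos_right hfac]
          calc Real.exp (-μ) * μ ^ k ≤ (Real.exp (-μ - a) * Real.exp k) * μ ^ k := by
                apply mul_le_mul_of_nonneg_right h2 (by positivity)
            _ = Real.exp (-μ - a) * (μ ^ k * Real.exp k) := by ring
        · have hset : {ω | X ω = k ∧ a ≤ (k : ℝ)} = (∅ : Set Ω) := by
            ext ω; simp [hk]
          rw [hset]
          simp
    _ = ENNReal.ofReal (Real.exp (-μ - a) * Real.exp (μ * Real.exp 1)) := by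
        rw [← ENNReal.ofReal_tsum_of_nonneg hnn hsummable]
        congr 1
        rw [hexp]
        simp only [← tsum_mul_left, mul_div_assoc]
    _ ≤ ENNReal.ofReal (Real.exp (-t)) := by
        apply ENNReal.ofReal_le_ofReal
        rw [← Real.exp_add]
        apply Real.exp_le_exp.2
        have he : Real.exp 1 < 2.7182818286 := Real.exp_one_lt_d9
        have h3 : μ * Real.exp 1 ≤ 3 * μ := by nlinarith
        simp only [hμdef, hadef] at *
        nlinarith
end
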